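/- Arrow comparison: for any unit types U, U' and types T, T' of the Add type system, if U'→T' ≼ U→T, then there exist type variables X⃗ and unit types V⃗ such that U→T ≡ (U'→T')[V⃗/X⃗]. -/

import Mathlib

set_option maxHeartbeats 1000000

/-! ## Terms of the non-deterministic call-by-value λ-calculus (de Bruijn indices) -/

inductive Tm : Type
  | var : ℕ → Tm
  | lam : Tm → Tm
  | app : Tm → Tm → Tm
  | add : Tm → Tm → Tm
  | zero : Tm
  deriving DecidableEq

namespace Tm

/-- Values: variables and abstractions. -/
inductive IsValue : Tm → Prop
  | var (n : ℕ) : IsValue (var n)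
  | lam (t : Tm) : IsValue (lam t)

/-- de Bruijn shifting: add `d` to every variable index `≥ c`. -/
def shift (d c : ℕ) : Tm → Tm
  | var n => if n < c then var n else var (n + d)
  | lam t => lam (shift d (c + 1) t)
  | app t u => app (shift d c t) (shift d c u)
  | add t u => add (shift d c t) (shift d c u)
  | zero => zero

/-- Capture-avoiding substitution of the variable `k` by `v` (removing the binder). -/
def subst (k : ℕ) (v : Tm) : Tm → Tm
  | var n => if n = k then shift k 0 v else if k < n then var (n - 1) else var n
  | lam t => lam (subst (k + 1) v t)
  | app t u => app (subst k v t) (subst k v u)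
  | add t u => add (subst k v t) (subst k v u)
  | zero => zero

/-- `ClosedUnder k t`: every free variable of `t` has index `< k`. -/
def ClosedUnder (k : ℕ) : Tm → Prop
  | var n => n < k
  | lam t => ClosedUnder (k + 1) t
  | app t u => ClosedUnder k t ∧ ClosedUnder k u
  | add t u => ClosedUnder k t ∧ ClosedUnder k u
  | zero => True

/-- Closed terms. -/
def Closed (t : Tm) : Prop := ClosedUnder 0 t

end Tm

open Tm

/-- The AC-equivalence on terms: the least congruence making `+`
associative and commutative (terms are considered modulo `Aeq`). -/
inductive Aeq : Tm → Tm → Prop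
  | refl (t : Tm) : Aeq t t
  | symm : Aeq t u → Aeq u t
  | trans : Aeq t u → Aeq u s → Aeq t s
  | comm (t u : Tm) : Aeq (.add t u) (.add u t)
  | assoc (t u s : Tm) : Aeq (.add t (.add u s)) (.add (.add t u) s)
  | lamCongr : Aeq t t' → Aeq (.lam t) (.lam t')
  | appCongr : Aeq t t' → Aeq u u' → Aeq (.app t u) (.app t' u')
  | addCongr : Aeq t t' → Aeq u u' → Aeq (.add t u) (.add t' u')

/-- One-step reduction (the five rewrite rules plus β, closed under all
contexts, and performed modulo the AC-equivalence of terms). -/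
inductive Step : Tm → Tm → Prop
  | distrRight (t u s : Tm) : Step (.app (.add t u) s) (.add (.app t s) (.app u s))
  | distrLeft (t u s : Tm) : Step (.app t (.add u s)) (.add (.app t u) (.app t s))
  | zeroApp (t : Tm) : Step (.app .zero t) .zero
  | appZero (t : Tm) : Step (.app t .zero) .zero
  | addZero (t : Tm) : Step (.add t .zero) t
  | beta (t v : Tm) : IsValue v → Step (.app (.lam t) v) (Tm.subst 0 v t)
  | appLeft : Step t t' → Step (.app t u) (.app t' u)
  | appRight : Step u u' → Step (.app t u) (.app t u')
  | addLeft : Step t t' → Step (.add t u) (.add t' u)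
  | addRight : Step u u' → Step (.add t u) (.add t u')
  | lamCongr : Step t t' → Step (.lam t) (.lam t')
  | ac : Aeq t t' → Step t' u' → Aeq u' u → Step t u

/-- Strong normalisation of a term: accessibility of the inverse reduction. -/
def SN (t : Tm) : Prop := Acc (fun a b => Step b a) t

/-- The set of strongly normalising closed terms. -/
def SNset : Set Tm := {t | Closed t ∧ SN t}

/-- Pseudo-values: abstractions and sums of pseudo-values. -/
inductive PseudoValue : Tm → Prop
  | lam (t : Tm) : PseudoValue (.lam t)
  | add : PseudoValue t → PseudoValue u → PseudoValue (.add t u)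

/-- Neutral terms: closed terms that are not pseudo-values. -/
def Neutral (t : Tm) : Prop := Closed t ∧ ¬ PseudoValue t

/-- The set of one-step reducts of `t`. -/
def Red (t : Tm) : Set Tm := {u | Step t u}

/-- The set of reducts (in any number of steps, including zero) of terms of `S`. -/
def RedStar (S : Set Tm) : Set Tm := {u | ∃ t ∈ S, Relation.ReflTransGen Step t u}

/-- The closure of a set of terms under (CR3). -/
inductive Clo (S : Set Tm) : Tm → Prop
  | base {t : Tm} : t ∈ S → Clo S t
  | step {t : Tm} : Neutral t → (∀ u, Step t u → Clo S u) → Clo S t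

/-- `clo S`: the least set containing `S` and closed under (CR3). -/
def clo (S : Set Tm) : Set Tm := {t | Clo S t}

/-- Reducibility candidates. -/
structure IsCandidate (A : Set Tm) : Prop where
  cr1 : A ⊆ SNset
  cr2 : ∀ t ∈ A, Red t ⊆ A
  cr3 : ∀ t, Neutral t → Red t ⊆ A → t ∈ A

/-- The arrow operator on sets of closed terms. -/
def CArrow (A B : Set Tm) : Set Tm := {t | Closed t ∧ ∀ u ∈ A, Tm.app t u ∈ B}

/-- The sum of two sets of (AC-classes of) terms. -/
def CSum (A B : Set Tm) : Set Tm := {s | ∃ t ∈ A, ∃ u ∈ B, Aeq s (Tm.add t u)}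

/-- The ⊞ operator on reducibility candidates. -/
def CPlus (A B : Set Tm) : Set Tm := clo (CSum A B ∪ A ∪ B)

/-! ## Types of the Add type system -/

mutual
  /-- Unit types. -/
  inductive UTy : Type
    | var : ℕ → UTy
    | arrow : UTy → Ty → UTy
    | all : UTy → UTy

  /-- Types. -/
  inductive Ty : Type
    | unit : UTy → Ty
    | add : Ty → Ty → Ty
    | zero : Ty
end

mutual
  /-- Shifting of type variables in unit types. -/
  def UTy.shift (d c : ℕ) : UTy → UTy
    | .var n => if n < c then .var n else .var (n + d)
    | .arrow U T => .arrow (UTy.shift d c U) (Ty.shift d c T)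
    | .all U => .all (UTy.shift d (c + 1) U)

  /-- Shifting of type variables in types. -/
  def Ty.shift (d c : ℕ) : Ty → Ty
    | .unit U => .unit (UTy.shift d c U)
    | .add T R => .add (Ty.shift d c T) (Ty.shift d c R)
    | .zero => .zero
end

mutual
  /-- Substitution of the (bound) type variable `k` by `V` in a unit type. -/
  def UTy.subst (k : ℕ) (V : UTy) : UTy → UTy
    | .var n => if n = k then UTy.shift k 0 V else if k < n then .var (n - 1) else .var n
    | .arrow U T => .arrow (UTy.subst k V U) (Ty.subst k V T)
    | .all U => .all (UTy.subst (k + 1) V U)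

  /-- Substitution of the (bound) type variable `k` by `V` in a type. -/
  def Ty.subst (k : ℕ) (V : UTy) : Ty → Ty
    | .unit U => .unit (UTy.subst k V U)
    | .add T R => .add (Ty.subst k V T) (Ty.subst k V R)
    | .zero => .zero
end

/-- Iterated substitution `U[V⃗/X⃗]` for a unit type under `|Vs|` quantifiers. -/
def UTy.msubst (Vs : List UTy) (U : UTy) : UTy := Vs.foldl (fun A V => UTy.subst 0 V A) U

/-- Iterated substitution `T[V⃗/X⃗]` for a type under `|Vs|` quantifiers. -/
def Ty.msubst (Vs : List UTy) (T : Ty) : Ty := Vs.foldl (fun A V => Ty.subst 0 V A) T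

mutual
  /-- Substitution of the free type variable `X` (seen at depth `c`) by `V` in a unit type. -/
  def UTy.replAux (X : ℕ) (V : UTy) (c : ℕ) : UTy → UTy
    | .var n => if n = X + c then UTy.shift c 0 V else .var n
    | .arrow U T => .arrow (UTy.replAux X V c U) (Ty.replAux X V c T)
    | .all U => .all (UTy.replAux X V (c + 1) U)

  /-- Substitution of the free type variable `X` (seen at depth `c`) by `V` in a type. -/
  def Ty.replAux (X : ℕ) (V : UTy) (c : ℕ) : Ty → Ty
    | .unit U => .unit (UTy.replAux X V c U)
    | .add T R => .add (Ty.replAux X V c T) (Ty.replAux X V c R)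
    | .zero => .zero
end

/-- Capture-avoiding substitution `U[V/X]` of a free type variable. -/
def UTy.repl (X : ℕ) (V : UTy) (U : UTy) : UTy := UTy.replAux X V 0 U

/-- Capture-avoiding substitution `T[V/X]` of a free type variable. -/
def Ty.repl (X : ℕ) (V : UTy) (T : Ty) : Ty := Ty.replAux X V 0 T

mutual
  /-- Abstraction of the free type variable `X` (at depth `c`), used to form `∀X.U`. -/
  def UTy.absAux (X c : ℕ) : UTy → UTy
    | .var n => if n = X + c then .var c else if c ≤ n then .var (n + 1) else .var n
    | .arrow U T => .arrow (UTy.absAux X c U) (Ty.absAux X c T)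
    | .all U => .all (UTy.absAux X (c + 1) U)

  /-- Abstraction of the free type variable `X` (at depth `c`) in a type. -/
  def Ty.absAux (X c : ℕ) : Ty → Ty
    | .unit U => .unit (UTy.absAux X c U)
    | .add T R => .add (Ty.absAux X c T) (Ty.absAux X c R)
    | .zero => .zero
end

/-- `∀X.U`: universal quantification of the free type variable `X` in `U`. -/
def UTy.genAll (X : ℕ) (U : UTy) : UTy := .all (UTy.absAux X 0 U)

mutual
  /-- `X` occurs free in a unit type. -/
  def UTy.Free (n : ℕ) : UTy → Prop
    | .var m => m = n
    | .arrow U T => UTy.Free n U ∨ Ty.Free n T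
    | .all U => UTy.Free (n + 1) U

  /-- `X` occurs free in a type. -/
  def Ty.Free (n : ℕ) : Ty → Prop
    | .unit U => UTy.Free n U
    | .add T R => Ty.Free n T ∨ Ty.Free n R
    | .zero => False
end

mutual
  /-- Equivalence of unit types (the least congruence making `+` on types
  associative, commutative, with neutral element `𝟘`). -/
  inductive UEq : UTy → UTy → Prop
    | refl (U : UTy) : UEq U U
    | symm : UEq U V → UEq V U
    | trans : UEq U V → UEq V W → UEq U W
    | arrow : UEq U U' → TEq T T' → UEq (.arrow U T) (.arrow U' T')
    | all : UEq U U' → UEq (.all U) (.all U')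

  /-- Equivalence of types: the least congruence such that
  `T+R ≡ R+T`, `T+(R+S) ≡ (T+R)+S` and `T+𝟘 ≡ T`. -/
  inductive TEq : Ty → Ty → Prop
    | refl (T : Ty) : TEq T T
    | symm : TEq T R → TEq R T
    | trans : TEq T R → TEq R S → TEq T S
    | unit : UEq U U' → TEq (.unit U) (.unit U')
    | addCongr : TEq T T' → TEq R R' → TEq (.add T R) (.add T' R')
    | comm (T R : Ty) : TEq (.add T R) (.add R T)
    | assoc (T R S : Ty) : TEq (.add T (.add R S)) (.add (.add T R) S)
    | zero (T : Ty) : TEq (.add T .zero) T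
end

/-- `Σ_{i} T_i`, with the empty sum being `𝟘`. -/
def sumT (Ts : List Ty) : Ty := Ts.foldl Ty.add Ty.zero

/-- `∀X₁.…∀X_k.U`. -/
def allN : ℕ → UTy → UTy
  | 0, U => U
  | k + 1, U => .all (allN k U)

/-- Lifting of type variables in a typing context (for ∀-introduction). -/
def liftCtx (Γ : List UTy) : List UTy := Γ.map (UTy.shift 1 0)

/-! ## The Add type system -/

/-- Typing judgements of the Add type system. -/
inductive Typing : List UTy → Tm → Ty → Prop
  | ax {Γ : List UTy} {n : ℕ} {U : UTy} : Γ[n]? = some U → Typing Γ (.var n) (.unit U)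
  | axZero {Γ : List UTy} : Typing Γ .zero .zero
  | equiv {Γ t T R} : Typing Γ t T → TEq T R → Typing Γ t R
  | arrI {Γ U t T} : Typing (U :: Γ) t T → Typing Γ (.lam t) (.unit (.arrow U T))
  | arrE {Γ t u} {k : ℕ} {U : UTy} {Ts : List Ty} {Vs : List (List UTy)} :
      Ts ≠ [] → Vs ≠ [] → (∀ V ∈ Vs, V.length = k) →
      Typing Γ t (sumT (Ts.map fun Ti => .unit (allN k (.arrow U Ti)))) →
      Typing Γ u (sumT (Vs.map fun Vj => .unit (UTy.msubst Vj U))) →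
      Typing Γ (.app t u)
        (sumT ((Ts.map fun Ti => Vs.map fun Vj => Ty.msubst Vj Ti).flatten))
  | addI {Γ t u T R} : Typing Γ t T → Typing Γ u R → Typing Γ (.add t u) (.add T R)
  | allE {Γ t U} (V : UTy) : Typing Γ t (.unit (.all U)) → Typing Γ t (.unit (UTy.subst 0 V U))
  | allI {Γ t U} : Typing (liftCtx Γ) t (.unit U) → Typing Γ t (.unit (.all U))

/-! ## Interpretation of types by reducibility candidates -/

/-- Extension of a valuation. -/
def consV (A : Set Tm) (ρ : ℕ → Set Tm) : ℕ → Set Tm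
  | 0 => A
  | n + 1 => ρ n

mutual
  /-- Interpretation of unit types. -/
  def interpU : UTy → (ℕ → Set Tm) → Set Tm
    | .var n, ρ => ρ n
    | .arrow U T, ρ => CArrow (interpU U ρ) (interpT T ρ)
    | .all U, ρ => {t | ∀ A : Set Tm, IsCandidate A → t ∈ interpU U (consV A ρ)}

  /-- Interpretation of types. -/
  def interpT : Ty → (ℕ → Set Tm) → Set Tm
    | .unit U, ρ => interpU U ρ
    | .add T R, ρ => CPlus (interpT T ρ) (interpT R ρ)
    | .zero, _ => clo ∅
end

/-- Lifting of a simultaneous substitution under a binder. -/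
def liftSub (σ : ℕ → Tm) : ℕ → Tm
  | 0 => .var 0
  | n + 1 => Tm.shift 1 0 (σ n)

/-- Simultaneous substitution `t_σ` of all free term variables of `t`. -/
def Tm.msubst (σ : ℕ → Tm) : Tm → Tm
  | .var n => σ n
  | .lam t => .lam (Tm.msubst (liftSub σ) t)
  | .app t u => .app (Tm.msubst σ t) (Tm.msubst σ u)
  | .add t u => .add (Tm.msubst σ t) (Tm.msubst σ u)
  | .zero => .zero

/-! ## The relations ⋖ and ≼ on types -/

/-- The relation `⋖` on unit types: `U₁ ⋖ U₂` iff either `U₂ ≡ ∀X.U₁`, or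
`U₁ ≡ ∀X.U'` and `U₂ ≡ U'[V/X]`. -/
inductive SSub : UTy → UTy → Prop
  | gen {U₁ U₂ : UTy} (X : ℕ) : UEq U₂ (UTy.genAll X U₁) → SSub U₁ U₂
  | inst {U₁ U₂ : UTy} (U' V : UTy) : UEq U₁ (.all U') → UEq U₂ (UTy.subst 0 V U') →
      SSub U₁ U₂

/-- The relation `≼`: the reflexive (with respect to `≡`) and transitive
closure of `⋖`, on types. -/
inductive TPre : Ty → Ty → Prop
  | ofEq : TEq T T' → TPre T T'
  | ofSSub {U V : UTy} : SSub U V → TPre (.unit U) (.unit V)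
  | trans : TPre T T' → TPre T' T'' → TPre T T''

/-! ## Trees and the structured type system Add_struct -/

/-- Binary trees with two kinds of leaves: `ℓ`-leaves and `𝟘`-leaves. -/
inductive ATree : Type
  | leaf : ATree
  | zleaf : ATree
  | node : ATree → ATree → ATree
  deriving DecidableEq

namespace ATree

/-- ATree composition: branch a copy of `A'` at each `ℓ`-leaf of `A`. -/
def comp : ATree → ATree → ATree
  | .leaf, A' => A'
  | .zleaf, _ => .zleaf
  | .node A B, A' => .node (comp A A') (comp B A')

/-- `LeafAt A w`: the word `w` (over `{l,r}`, here `{false,true}`) is the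
address of an `ℓ`-leaf of `A`. -/
inductive LeafAt : ATree → List Bool → Prop
  | leaf : LeafAt .leaf []
  | left {A B w} : LeafAt A w → LeafAt (.node A B) (false :: w)
  | right {A B w} : LeafAt B w → LeafAt (.node A B) (true :: w)

/-- Labelling of the `ℓ`-leaves of a tree by unit types, yielding a type. -/
def labelU : ATree → (List Bool → UTy) → Ty
  | .leaf, f => .unit (f [])
  | .zleaf, _ => .zero
  | .node A B, f => .add (labelU A fun w => f (false :: w)) (labelU B fun w => f (true :: w))

/-- Labelling of the `ℓ`-leaves of a tree by types, yielding a type. -/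
def labelT : ATree → (List Bool → Ty) → Ty
  | .leaf, f => f []
  | .zleaf, _ => .zero
  | .node A B, f => .add (labelT A fun w => f (false :: w)) (labelT B fun w => f (true :: w))

/-- Split an address of a leaf of `A ∘ A'` into the `A`-part and the `A'`-part. -/
def split : ATree → List Bool → List Bool × List Bool
  | .leaf, p => ([], p)
  | .zleaf, p => ([], p)
  | .node A _, false :: p => ((split A p).1.cons false, (split A p).2)
  | .node _ B, true :: p => ((split B p).1.cons true, (split B p).2)
  | .node _ _, [] => ([], [])

end ATree

/-- Typing derivations of the structured type system Add_struct. -/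
inductive SDeriv : List UTy → Tm → Ty → Type
  | ax (Γ : List UTy) (n : ℕ) (U : UTy) (h : Γ[n]? = some U) : SDeriv Γ (.var n) (.unit U)
  | axZero (Γ : List UTy) : SDeriv Γ .zero .zero
  | arrI {Γ U t T} (D : SDeriv (U :: Γ) t T) : SDeriv Γ (.lam t) (.unit (.arrow U T))
  | addI {Γ t u T R} (D₁ : SDeriv Γ t T) (D₂ : SDeriv Γ u R) :
      SDeriv Γ (.add t u) (.add T R)
  | allE {Γ t U} (V : UTy) (D : SDeriv Γ t (.unit (.all U))) :
      SDeriv Γ t (.unit (UTy.subst 0 V U))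
  | allI {Γ t U} (D : SDeriv (liftCtx Γ) t (.unit U)) : SDeriv Γ t (.unit (.all U))
  | arrE {Γ t u} (A A' : ATree) (k : ℕ) (U : UTy) (Tf : List Bool → Ty)
      (Vf : List Bool → List UTy)
      (hlen : ∀ v, A'.LeafAt v → (Vf v).length = k)
      (D₁ : SDeriv Γ t (A.labelU fun w => allN k (.arrow U (Tf w))))
      (D₂ : SDeriv Γ u (A'.labelU fun v => UTy.msubst (Vf v) U)) :
      SDeriv Γ (.app t u)
        ((A.comp A').labelT fun p => Ty.msubst (Vf (A.split p).2) (Tf (A.split p).1))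

/-! ## System F with pairs -/

/-- Terms of System F with pairs. -/
inductive FTm : Type
  | var : ℕ → FTm
  | lam : FTm → FTm
  | app : FTm → FTm → FTm
  | star : FTm
  | pair : FTm → FTm → FTm
  | pl : FTm → FTm
  | pr : FTm → FTm
  deriving DecidableEq

/-- Types of System F with pairs. -/
inductive FTy : Type
  | var : ℕ → FTy
  | arrow : FTy → FTy → FTy
  | all : FTy → FTy
  | one : FTy
  | prod : FTy → FTy → FTy
  deriving DecidableEq

/-- Shifting of term variables in F-terms. -/
def FTm.shift (d c : ℕ) : FTm → FTm
  | .var n => if n < c then .var n else .var (n + d)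
  | .lam t => .lam (FTm.shift d (c + 1) t)
  | .app t u => .app (FTm.shift d c t) (FTm.shift d c u)
  | .star => .star
  | .pair t u => .pair (FTm.shift d c t) (FTm.shift d c u)
  | .pl t => .pl (FTm.shift d c t)
  | .pr t => .pr (FTm.shift d c t)

/-- Substitution of the term variable `k` by `v` in an F-term. -/
def FTm.subst (k : ℕ) (v : FTm) : FTm → FTm
  | .var n => if n = k then FTm.shift k 0 v else if k < n then .var (n - 1) else .var n
  | .lam t => .lam (FTm.subst (k + 1) v t)
  | .app t u => .app (FTm.subst k v t) (FTm.subst k v u)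
  | .star => .star
  | .pair t u => .pair (FTm.subst k v t) (FTm.subst k v u)
  | .pl t => .pl (FTm.subst k v t)
  | .pr t => .pr (FTm.subst k v t)

/-- Shifting of type variables in F-types. -/
def FTy.shift (d c : ℕ) : FTy → FTy
  | .var n => if n < c then .var n else .var (n + d)
  | .arrow A B => .arrow (FTy.shift d c A) (FTy.shift d c B)
  | .all A => .all (FTy.shift d (c + 1) A)
  | .one => .one
  | .prod A B => .prod (FTy.shift d c A) (FTy.shift d c B)

/-- Substitution of the type variable `k` by `B` in an F-type. -/
def FTy.subst (k : ℕ) (B : FTy) : FTy → FTy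
  | .var n => if n = k then FTy.shift k 0 B else if k < n then .var (n - 1) else .var n
  | .arrow A A' => .arrow (FTy.subst k B A) (FTy.subst k B A')
  | .all A => .all (FTy.subst (k + 1) B A)
  | .one => .one
  | .prod A A' => .prod (FTy.subst k B A) (FTy.subst k B A')

/-- One-step reduction in System F with pairs. -/
inductive FStep : FTm → FTm → Prop
  | beta (t u : FTm) : FStep (.app (.lam t) u) (FTm.subst 0 u t)
  | plPair (t u : FTm) : FStep (.pl (.pair t u)) t
  | prPair (t u : FTm) : FStep (.pr (.pair t u)) u
  | eta (t : FTm) : FStep (.lam (.app (FTm.shift 1 0 t) (.var 0))) t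
  | sp (p : FTm) : FStep (.pair (.pl p) (.pr p)) p
  | lamCongr : FStep t t' → FStep (.lam t) (.lam t')
  | appLeft : FStep t t' → FStep (.app t u) (.app t' u)
  | appRight : FStep u u' → FStep (.app t u) (.app t u')
  | pairLeft : FStep t t' → FStep (.pair t u) (.pair t' u)
  | pairRight : FStep u u' → FStep (.pair t u) (.pair t u')
  | plCongr : FStep t t' → FStep (.pl t) (.pl t')
  | prCongr : FStep t t' → FStep (.pr t) (.pr t')

/-- Typing in System F with pairs. -/
inductive FTyping : List FTy → FTm → FTy → Prop
  | ax {Γ n A} : Γ[n]? = some A → FTyping Γ (.var n) A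
  | star {Γ} : FTyping Γ .star .one
  | lam {Γ A t B} : FTyping (A :: Γ) t B → FTyping Γ (.lam t) (.arrow A B)
  | app {Γ t u A B} : FTyping Γ t (.arrow A B) → FTyping Γ u A → FTyping Γ (.app t u) B
  | pair {Γ t u A B} : FTyping Γ t A → FTyping Γ u B → FTyping Γ (.pair t u) (.prod A B)
  | pl {Γ t A B} : FTyping Γ t (.prod A B) → FTyping Γ (.pl t) A
  | pr {Γ t A B} : FTyping Γ t (.prod A B) → FTyping Γ (.pr t) B
  | allI {Γ t A} : FTyping (Γ.map (FTy.shift 1 0)) t A → FTyping Γ t (.all A)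
  | allE {Γ t A} (B : FTy) : FTyping Γ t (.all A) → FTyping Γ t (FTy.subst 0 B A)

/-! ## The translation from Add_struct into System F with pairs -/

mutual
  /-- Translation of unit types into F-types. -/
  def transU : UTy → FTy
    | .var n => .var n
    | .arrow U T => .arrow (transU U) (transT T)
    | .all U => .all (transU U)

  /-- Translation of Add types into F-types. -/
  def transT : Ty → FTy
    | .unit U => transU U
    | .add T R => .prod (transT T) (transT R)
    | .zero => .one
end

/-- Labelling of the `ℓ`-leaves of a tree by F-terms (pairs at the nodes, `⋆`
at the `𝟘`-leaves), yielding an F-term. -/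
def ATree.labelF : ATree → (List Bool → FTm) → FTm
  | .leaf, f => f []
  | .zleaf, _ => .star
  | .node A B, f => .pair (ATree.labelF A fun w => f (false :: w))
      (ATree.labelF B fun w => f (true :: w))

/-- `π_{w̄}(t)`: the composite of projections along the mirror of the word `w`. -/
def projMirror (w : List Bool) (t : FTm) : FTm :=
  w.foldl (fun s b => if b then .pr s else .pl s) t

/-- The translation `|t|_D` of a term typed in Add_struct by a derivation `D`
into an F-term. -/
def transD : ∀ {Γ : List UTy} {t : Tm} {T : Ty}, SDeriv Γ t T → FTm
  | _, _, _, .ax _ n _ _ => .var n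
  | _, _, _, .axZero _ => .star
  | _, _, _, .arrI D => .lam (transD D)
  | _, _, _, .addI D₁ D₂ => .pair (transD D₁) (transD D₂)
  | _, _, _, .allE _ D => transD D
  | _, _, _, .allI D => transD D
  | _, _, _, .arrE A A' _ _ _ _ _ D₁ D₂ =>
      (A.comp A').labelF fun p =>
        .app (projMirror (A.split p).1 (transD D₁)) (projMirror (A.split p).2 (transD D₂))

/-! ## Structural reduction (without AC and without the rule `t+𝟎 → t`) -/

/-- One-step reduction by a rule other than `t+𝟎 → t` (and not using the
AC-equivalence, which is absent from Add_struct). -/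
inductive SStep : Tm → Tm → Prop
  | distrRight (t u s : Tm) : SStep (.app (.add t u) s) (.add (.app t s) (.app u s))
  | distrLeft (t u s : Tm) : SStep (.app t (.add u s)) (.add (.app t u) (.app t s))
  | zeroApp (t : Tm) : SStep (.app .zero t) .zero
  | appZero (t : Tm) : SStep (.app t .zero) .zero
  | beta (t v : Tm) : IsValue v → SStep (.app (.lam t) v) (Tm.subst 0 v t)
  | appLeft : SStep t t' → SStep (.app t u) (.app t' u)
  | appRight : SStep u u' → SStep (.app t u) (.app t u')
  | addLeft : SStep t t' → SStep (.add t u) (.add t' u)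
  | addRight : SStep u u' → SStep (.add t u) (.add t u')
  | lamCongr : SStep t t' → SStep (.lam t) (.lam t')

/-! ## The partial inverse translation -/

/-- Partial inverse translation on types. -/
def invTy : FTy → Option Ty
  | .var n => some (.unit (.var n))
  | .one => some .zero
  | .all A =>
    match invTy A with
    | some (.unit U) => some (.unit (.all U))
    | _ => none
  | .prod A B =>
    match invTy A, invTy B with
    | some T, some R => some (.add T R)
    | _, _ => none
  | .arrow A B =>
    match invTy A, invTy B with
    | some (.unit U), some T => some (.unit (.arrow U T))
    | _, _ => none

/-- An F-term of the shape `A[wv ↦ π_{w̄}(t) π_{v̄}(u)]` for a non-trivial tree. -/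
def IsTreeApp (s : FTm) : Prop :=
  ∃ (A A' : ATree) (t u : FTm), A.comp A' ≠ .leaf ∧ A.comp A' ≠ .zleaf ∧
    s = (A.comp A').labelF fun p =>
      .app (projMirror (A.split p).1 t) (projMirror (A.split p).2 u)

/-- The partial inverse translation on F-terms, as a relation. -/
inductive InvTm : FTm → Tm → Prop
  | var (n : ℕ) : InvTm (.var n) (.var n)
  | star : InvTm .star .zero
  | lam : InvTm t t' → InvTm (.lam t) (.lam t')
  | app : InvTm t t' → InvTm u u' → InvTm (.app t u) (.app t' u')
  | treeApp (A A' : ATree) {t u : FTm} {t' u' : Tm} :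
      A.comp A' ≠ .leaf → A.comp A' ≠ .zleaf → InvTm t t' → InvTm u u' →
      InvTm ((A.comp A').labelF fun p =>
          .app (projMirror (A.split p).1 t) (projMirror (A.split p).2 u))
        (.app t' u')
  | pair : ¬ IsTreeApp (.pair t u) → InvTm t t' → InvTm u u' →
      InvTm (.pair t u) (.add t' u')


/-!
Write `A[σ]` for the simultaneous substitution of `σ n` for every free type variable `n`.
Along a chain of `≡` and `⋖` steps starting from `U'→T'`, every type stays equivalent to some
`∀X₁…∀X_k.(U'→T')[σ]`: a generalisation `∀X.−` adds a quantifier and moves the abstraction of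
`X` into `σ`, an instantiation removes the outermost quantifier and moves the substitution into
`σ` (the outermost `∀` cannot come from `σ`, since `(U'→T')[σ]` is an arrow). At `U→T` no
quantifier is left, so `U→T ≡ (U'→T')[σ]`, and a simultaneous substitution is a sequence of
single ones once the free variables have been renamed apart.
-/

def UTy.liftSubst (σ : ℕ → UTy) : ℕ → UTy
  | 0 => .var 0
  | n + 1 => UTy.shift 1 0 (σ n)

mutual
  def UTy.psubst (σ : ℕ → UTy) : UTy → UTy
    | .var n => σ n
    | .arrow U T => .arrow (UTy.psubst σ U) (Ty.psubst σ T)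
    | .all U => .all (UTy.psubst (UTy.liftSubst σ) U)

  def Ty.psubst (σ : ℕ → UTy) : Ty → Ty
    | .unit U => .unit (UTy.psubst σ U)
    | .add T R => .add (Ty.psubst σ T) (Ty.psubst σ R)
    | .zero => .zero
end

namespace UTy

def ofRen (ρ : ℕ → ℕ) : ℕ → UTy := fun n => .var (ρ n)

def liftRen (ρ : ℕ → ℕ) : ℕ → ℕ
  | 0 => 0
  | n + 1 => ρ n + 1

def shiftRen (d c : ℕ) : ℕ → ℕ := fun n => if n < c then n else n + d

theorem liftSubst_ofRen (ρ : ℕ → ℕ) : liftSubst (ofRen ρ) = ofRen (liftRen ρ) := by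
  funext n; cases n <;> simp [liftSubst, ofRen, liftRen, UTy.shift]

theorem liftRen_shiftRen (d c : ℕ) : liftRen (shiftRen d c) = shiftRen d (c + 1) := by
  funext n; cases n <;> simp only [liftRen, shiftRen] <;> split_ifs <;> omega

end UTy

open UTy

mutual
theorem UTy.shift_eq_psubst : ∀ (A : UTy) (d c : ℕ),
    A.shift d c = A.psubst (ofRen (shiftRen d c))
  | .var n, d, c => by simp only [UTy.shift, UTy.psubst, ofRen, shiftRen]; split_ifs <;> rfl
  | .arrow U T, d, c => by
      simp only [UTy.shift, UTy.psubst, UTy.shift_eq_psubst U, Ty.shift_eq_psubst T]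
  | .all U, d, c => by
      simp only [UTy.shift, UTy.psubst, UTy.shift_eq_psubst U, liftSubst_ofRen, liftRen_shiftRen]
theorem Ty.shift_eq_psubst : ∀ (A : Ty) (d c : ℕ),
    A.shift d c = A.psubst (ofRen (shiftRen d c))
  | .unit U, d, c => by simp only [Ty.shift, Ty.psubst, UTy.shift_eq_psubst U]
  | .add T R, d, c => by
      simp only [Ty.shift, Ty.psubst, Ty.shift_eq_psubst T, Ty.shift_eq_psubst R]
  | .zero, _, _ => rfl
end

mutual
theorem UTy.psubst_psubst_ofRen : ∀ (A : UTy) (σ : ℕ → UTy) (ρ : ℕ → ℕ),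
    (A.psubst (ofRen ρ)).psubst σ = A.psubst (σ ∘ ρ)
  | .var _, _, _ => rfl
  | .arrow U T, σ, ρ => by
      simp only [UTy.psubst, UTy.psubst_psubst_ofRen U, Ty.psubst_psubst_ofRen T]
  | .all U, σ, ρ => by
      have hlift : liftSubst (σ ∘ ρ) = liftSubst σ ∘ liftRen ρ := by funext n; cases n <;> rfl
      simp only [UTy.psubst, liftSubst_ofRen, UTy.psubst_psubst_ofRen U, hlift]
theorem Ty.psubst_psubst_ofRen : ∀ (A : Ty) (σ : ℕ → UTy) (ρ : ℕ → ℕ),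
    (A.psubst (ofRen ρ)).psubst σ = A.psubst (σ ∘ ρ)
  | .unit U, σ, ρ => by simp only [Ty.psubst, UTy.psubst_psubst_ofRen U]
  | .add T R, σ, ρ => by
      simp only [Ty.psubst, Ty.psubst_psubst_ofRen T, Ty.psubst_psubst_ofRen R]
  | .zero, _, _ => rfl
end

theorem UTy.shift_psubst_ofRen (B : UTy) (ρ : ℕ → ℕ) :
    (B.psubst (ofRen ρ)).shift 1 0 = (B.shift 1 0).psubst (ofRen (liftRen ρ)) := by
  simp only [UTy.shift_eq_psubst, UTy.psubst_psubst_ofRen]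
  rfl

mutual
theorem UTy.psubst_ofRen_psubst : ∀ (A : UTy) (σ : ℕ → UTy) (ρ : ℕ → ℕ),
    (A.psubst σ).psubst (ofRen ρ) = A.psubst fun n => (σ n).psubst (ofRen ρ)
  | .var _, _, _ => rfl
  | .arrow U T, σ, ρ => by
      simp only [UTy.psubst, UTy.psubst_ofRen_psubst U, Ty.psubst_ofRen_psubst T]
  | .all U, σ, ρ => by
      have hlift : liftSubst (fun n => (σ n).psubst (ofRen ρ))
          = fun n => (liftSubst σ n).psubst (ofRen (liftRen ρ)) := by
        funext n; cases n
        · rfl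
        · exact UTy.shift_psubst_ofRen _ _
      simp only [UTy.psubst, liftSubst_ofRen, UTy.psubst_ofRen_psubst U, hlift]
theorem Ty.psubst_ofRen_psubst : ∀ (A : Ty) (σ : ℕ → UTy) (ρ : ℕ → ℕ),
    (A.psubst σ).psubst (ofRen ρ) = A.psubst fun n => (σ n).psubst (ofRen ρ)
  | .unit U, σ, ρ => by simp only [Ty.psubst, UTy.psubst_ofRen_psubst U]
  | .add T R, σ, ρ => by
      simp only [Ty.psubst, Ty.psubst_ofRen_psubst T, Ty.psubst_ofRen_psubst R]
  | .zero, _, _ => rfl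
end

theorem UTy.shift_psubst (B : UTy) (σ : ℕ → UTy) :
    (B.psubst σ).shift 1 0 = (B.shift 1 0).psubst (liftSubst σ) := by
  simp only [UTy.shift_eq_psubst, UTy.psubst_ofRen_psubst, UTy.psubst_psubst_ofRen]
  congr 1
  funext n
  simp [shiftRen, liftSubst, UTy.shift_eq_psubst]

mutual
theorem UTy.psubst_psubst : ∀ (A : UTy) (σ τ : ℕ → UTy),
    (A.psubst τ).psubst σ = A.psubst fun n => (τ n).psubst σ
  | .var _, _, _ => rfl
  | .arrow U T, σ, τ => by simp only [UTy.psubst, UTy.psubst_psubst U, Ty.psubst_psubst T]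
  | .all U, σ, τ => by
      have hlift : liftSubst (fun n => (τ n).psubst σ)
          = fun n => (liftSubst τ n).psubst (liftSubst σ) := by
        funext n; cases n
        · rfl
        · exact UTy.shift_psubst _ _
      simp only [UTy.psubst, UTy.psubst_psubst U, hlift]
theorem Ty.psubst_psubst : ∀ (A : Ty) (σ τ : ℕ → UTy),
    (A.psubst τ).psubst σ = A.psubst fun n => (τ n).psubst σ
  | .unit U, σ, τ => by simp only [Ty.psubst, UTy.psubst_psubst U]
  | .add T R, σ, τ => by simp only [Ty.psubst, Ty.psubst_psubst T, Ty.psubst_psubst R]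
  | .zero, _, _ => rfl
end

theorem UTy.liftSubst_var : liftSubst UTy.var = UTy.var := by
  funext n; cases n <;> simp [liftSubst, UTy.shift]

mutual
theorem UTy.psubst_var : ∀ A : UTy, A.psubst .var = A
  | .var _ => rfl
  | .arrow U T => by simp only [UTy.psubst, UTy.psubst_var U, Ty.psubst_var T]
  | .all U => by simp only [UTy.psubst, liftSubst_var, UTy.psubst_var U]
theorem Ty.psubst_var : ∀ A : Ty, A.psubst .var = A
  | .unit U => by simp only [Ty.psubst, UTy.psubst_var U]
  | .add T R => by simp only [Ty.psubst, Ty.psubst_var T, Ty.psubst_var R]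
  | .zero => rfl
end

mutual
  def UTy.fvBound : UTy → ℕ
    | .var n => n + 1
    | .arrow U T => max U.fvBound T.fvBound
    | .all U => U.fvBound - 1

  def Ty.fvBound : Ty → ℕ
    | .unit U => U.fvBound
    | .add T R => max T.fvBound R.fvBound
    | .zero => 0
end

mutual
theorem UTy.psubst_congr : ∀ (A : UTy) {σ τ : ℕ → UTy},
    (∀ n < A.fvBound, σ n = τ n) → A.psubst σ = A.psubst τ
  | .var n, _, _, h => h n (by simp [UTy.fvBound])
  | .arrow U T, _, _, h => by
      simp only [UTy.psubst]
      rw [UTy.psubst_congr U fun n hn => h n (by simp only [UTy.fvBound]; omega),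
        Ty.psubst_congr T fun n hn => h n (by simp only [UTy.fvBound]; omega)]
  | .all U, σ, τ, h => by
      have hlift : ∀ n < U.fvBound, liftSubst σ n = liftSubst τ n
        | 0, _ => rfl
        | m + 1, hm => by rw [liftSubst, liftSubst, h m (by simp only [UTy.fvBound]; omega)]
      simp only [UTy.psubst, UTy.psubst_congr U hlift]
theorem Ty.psubst_congr : ∀ (A : Ty) {σ τ : ℕ → UTy},
    (∀ n < A.fvBound, σ n = τ n) → A.psubst σ = A.psubst τ
  | .unit U, _, _, h => by simp only [Ty.psubst, UTy.psubst_congr U h]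
  | .add T R, _, _, h => by
      simp only [Ty.psubst]
      rw [Ty.psubst_congr T fun n hn => h n (by simp only [Ty.fvBound]; omega),
        Ty.psubst_congr R fun n hn => h n (by simp only [Ty.fvBound]; omega)]
  | .zero, _, _, _ => rfl
end

theorem UTy.shift_zero (A : UTy) : A.shift 0 0 = A := by
  rw [UTy.shift_eq_psubst, UTy.psubst_congr A (τ := .var) fun n _ => by simp [ofRen, shiftRen],
    UTy.psubst_var]

theorem UTy.shift_one_shift (V : UTy) (k : ℕ) : (V.shift k 0).shift 1 0 = V.shift (k + 1) 0 := by
  simp only [UTy.shift_eq_psubst, UTy.psubst_psubst_ofRen]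
  rfl

namespace UTy

def substFn (k : ℕ) (V : UTy) : ℕ → UTy := fun n =>
  if n = k then V.shift k 0 else if k < n then .var (n - 1) else .var n

def absFn (X c : ℕ) : ℕ → UTy := fun n =>
  if n = X + c then .var c else if c ≤ n then .var (n + 1) else .var n

def replFn (X : ℕ) (V : UTy) (c : ℕ) : ℕ → UTy := fun n =>
  if n = X + c then V.shift c 0 else .var n

theorem liftSubst_substFn (k : ℕ) (V : UTy) : liftSubst (substFn k V) = substFn (k + 1) V := by
  funext n
  cases n with
  | zero => simp [liftSubst, substFn]
  | succ n =>
    simp only [liftSubst, substFn]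
    split_ifs <;> first | omega | simp_all [UTy.shift, UTy.shift_one_shift] <;> omega

theorem liftSubst_absFn (X c : ℕ) : liftSubst (absFn X c) = absFn X (c + 1) := by
  funext n
  cases n with
  | zero => simp [liftSubst, absFn]
  | succ n =>
    simp only [liftSubst, absFn]
    split_ifs <;> first | omega | simp [UTy.shift]

theorem liftSubst_replFn (X : ℕ) (V : UTy) (c : ℕ) :
    liftSubst (replFn X V c) = replFn X V (c + 1) := by
  funext n
  cases n with
  | zero => simp [liftSubst, replFn]
  | succ n =>
    simp only [liftSubst, replFn]
    split_ifs <;> first | omega | simp [UTy.shift, UTy.shift_one_shift]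

end UTy

mutual
theorem UTy.subst_eq_psubst : ∀ (A : UTy) (k : ℕ) (V : UTy),
    UTy.subst k V A = A.psubst (substFn k V)
  | .var _, _, _ => rfl
  | .arrow U T, k, V => by
      simp only [UTy.subst, UTy.psubst, UTy.subst_eq_psubst U, Ty.subst_eq_psubst T]
  | .all U, k, V => by
      simp only [UTy.subst, UTy.psubst, UTy.subst_eq_psubst U, liftSubst_substFn]
theorem Ty.subst_eq_psubst : ∀ (A : Ty) (k : ℕ) (V : UTy),
    Ty.subst k V A = A.psubst (substFn k V)
  | .unit U, k, V => by simp only [Ty.subst, Ty.psubst, UTy.subst_eq_psubst U]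
  | .add T R, k, V => by
      simp only [Ty.subst, Ty.psubst, Ty.subst_eq_psubst T, Ty.subst_eq_psubst R]
  | .zero, _, _ => rfl
end

mutual
theorem UTy.absAux_eq_psubst : ∀ (A : UTy) (X c : ℕ), A.absAux X c = A.psubst (absFn X c)
  | .var _, _, _ => rfl
  | .arrow U T, X, c => by
      simp only [UTy.absAux, UTy.psubst, UTy.absAux_eq_psubst U, Ty.absAux_eq_psubst T]
  | .all U, X, c => by
      simp only [UTy.absAux, UTy.psubst, UTy.absAux_eq_psubst U, liftSubst_absFn]
theorem Ty.absAux_eq_psubst : ∀ (A : Ty) (X c : ℕ), A.absAux X c = A.psubst (absFn X c)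
  | .unit U, X, c => by simp only [Ty.absAux, Ty.psubst, UTy.absAux_eq_psubst U]
  | .add T R, X, c => by
      simp only [Ty.absAux, Ty.psubst, Ty.absAux_eq_psubst T, Ty.absAux_eq_psubst R]
  | .zero, _, _ => rfl
end

mutual
theorem UTy.replAux_eq_psubst : ∀ (A : UTy) (X : ℕ) (V : UTy) (c : ℕ),
    UTy.replAux X V c A = A.psubst (replFn X V c)
  | .var _, _, _, _ => rfl
  | .arrow U T, X, V, c => by
      simp only [UTy.replAux, UTy.psubst, UTy.replAux_eq_psubst U, Ty.replAux_eq_psubst T]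
  | .all U, X, V, c => by
      simp only [UTy.replAux, UTy.psubst, UTy.replAux_eq_psubst U, liftSubst_replFn]
theorem Ty.replAux_eq_psubst : ∀ (A : Ty) (X : ℕ) (V : UTy) (c : ℕ),
    Ty.replAux X V c A = A.psubst (replFn X V c)
  | .unit U, X, V, c => by simp only [Ty.replAux, Ty.psubst, UTy.replAux_eq_psubst U]
  | .add T R, X, V, c => by
      simp only [Ty.replAux, Ty.psubst, Ty.replAux_eq_psubst T, Ty.replAux_eq_psubst R]
  | .zero, _, _, _ => rfl
end

theorem UTy.repl_eq_psubst (X : ℕ) (V B : UTy) : UTy.repl X V B = B.psubst (replFn X V 0) :=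
  UTy.replAux_eq_psubst B X V 0

theorem UTy.repl_var_self (X : ℕ) (V : UTy) : UTy.repl X V (.var X) = V := by
  simp [UTy.repl, UTy.replAux, UTy.shift_zero]

theorem UTy.repl_var_of_ne {X n : ℕ} (V : UTy) (h : n ≠ X) :
    UTy.repl X V (.var n) = .var n := by
  simp [UTy.repl, UTy.replAux, h]

theorem UTy.repl_of_fvBound_le {X : ℕ} (V : UTy) {B : UTy} (h : B.fvBound ≤ X) :
    UTy.repl X V B = B := by
  rw [UTy.repl_eq_psubst, UTy.psubst_congr B (τ := .var) fun n hn => by simp [replFn]; omega,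
    UTy.psubst_var]

theorem UTy.repl_psubst (X : ℕ) (V B : UTy) (σ : ℕ → UTy) :
    UTy.repl X V (B.psubst σ) = B.psubst fun n => UTy.repl X V (σ n) := by
  simp only [UTy.repl_eq_psubst, UTy.psubst_psubst]

mutual
theorem UEq.psubst {A B : UTy} : UEq A B → ∀ σ, UEq (A.psubst σ) (B.psubst σ)
  | .refl _, _ => .refl _
  | .symm h, σ => (h.psubst σ).symm
  | .trans h₁ h₂, σ => (h₁.psubst σ).trans (h₂.psubst σ)
  | .arrow h₁ h₂, σ => .arrow (h₁.psubst σ) (h₂.psubst σ)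
  | .all h, σ => .all (h.psubst (liftSubst σ))
theorem TEq.psubst {T R : Ty} : TEq T R → ∀ σ, TEq (T.psubst σ) (R.psubst σ)
  | .refl _, _ => .refl _
  | .symm h, σ => (h.psubst σ).symm
  | .trans h₁ h₂, σ => (h₁.psubst σ).trans (h₂.psubst σ)
  | .unit h, σ => .unit (h.psubst σ)
  | .addCongr h₁ h₂, σ => .addCongr (h₁.psubst σ) (h₂.psubst σ)
  | .comm _ _, _ => .comm _ _
  | .assoc _ _ _, _ => .assoc _ _ _
  | .zero _, _ => .zero _
end

def UTy.IsAll : UTy → Prop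
  | .all _ => True
  | _ => False

theorem UEq.isAll_iff {A B : UTy} : UEq A B → (A.IsAll ↔ B.IsAll)
  | .refl _ => Iff.rfl
  | .symm h => h.isAll_iff.symm
  | .trans h₁ h₂ => h₁.isAll_iff.trans h₂.isAll_iff
  | .arrow _ _ => Iff.rfl
  | .all _ => Iff.rfl

def UTy.body : UTy → UTy
  | .all A => A
  | A => A

theorem UEq.body {A B : UTy} : UEq A B → UEq A.body B.body
  | .refl _ => .refl _
  | .symm h => h.body.symm
  | .trans h₁ h₂ => h₁.body.trans h₂.body
  | .arrow h₁ h₂ => .arrow h₁ h₂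
  | .all h => h

theorem UEq.of_all {A B : UTy} (h : UEq (.all A) (.all B)) : UEq A B := h.body

def Ty.units : Ty → Multiset UTy
  | .unit U => {U}
  | .add T R => T.units + R.units
  | .zero => 0

theorem Multiset.rel_singleton {α β : Type*} {r : α → β → Prop} {a : α} {b : β} :
    Multiset.Rel r {a} {b} ↔ r a b := by
  refine ⟨fun h => ?_, fun h => .cons h .zero⟩
  obtain ⟨b', bs, hab', hbs, hb⟩ := Multiset.rel_cons_left.mp h
  rw [Multiset.rel_zero_left] at hbs
  rw [hbs, Multiset.cons_zero, Multiset.singleton_inj] at hb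
  exact hb ▸ hab'

theorem rel_uEq_refl (s : Multiset UTy) : Multiset.Rel UEq s s :=
  Multiset.rel_refl_of_refl_on fun U _ => .refl U

instance : IsTrans UTy UEq := ⟨fun _ _ _ => UEq.trans⟩

theorem TEq.rel_units {T R : Ty} : TEq T R → Multiset.Rel UEq T.units R.units
  | .refl _ => rel_uEq_refl _
  | .symm h => Multiset.rel_flip.mp (h.rel_units.mono fun _ _ _ _ => UEq.symm)
  | .trans h₁ h₂ => h₁.rel_units.trans UEq h₂.rel_units
  | .unit h => Multiset.rel_singleton.mpr h
  | .addCongr h₁ h₂ => h₁.rel_units.add h₂.rel_units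
  | .comm T R => by rw [Ty.units, Ty.units, add_comm]; exact rel_uEq_refl _
  | .assoc T R S => by
      simp only [Ty.units]; rw [add_assoc]; exact rel_uEq_refl _
  | .zero T => by rw [Ty.units, Ty.units, add_zero]; exact rel_uEq_refl _

theorem TEq.uEq_of_unit {U V : UTy} (h : TEq (.unit U) (.unit V)) : UEq U V :=
  Multiset.rel_singleton.mp h.rel_units

theorem UTy.absAux_allN (X : ℕ) : ∀ (k c : ℕ) (U : UTy),
    (allN k U).absAux X c = allN k (U.absAux X (c + k))
  | 0, _, _ => rfl
  | k + 1, c, U => by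
      simp only [allN, UTy.absAux, UTy.absAux_allN X k (c + 1) U, Nat.add_right_comm c 1 k]
      rfl

theorem UTy.subst_allN (V : UTy) : ∀ (k c : ℕ) (U : UTy),
    UTy.subst c V (allN k U) = allN k (UTy.subst (c + k) V U)
  | 0, _, _ => rfl
  | k + 1, c, U => by
      simp only [allN, UTy.subst, UTy.subst_allN V k (c + 1) U, Nat.add_right_comm c 1 k]
      rfl

def UTy.IsGenInstance (A B : UTy) : Prop :=
  ∃ k σ, UEq B (allN k (A.psubst σ))

namespace UTy.IsGenInstance

variable {A B : UTy}

theorem refl (A : UTy) : IsGenInstance A A :=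
  ⟨0, .var, by rw [allN, UTy.psubst_var]; exact .refl A⟩

theorem of_uEq {B' : UTy} (hA : IsGenInstance A B) (h : UEq B B') : IsGenInstance A B' :=
  let ⟨k, σ, hB⟩ := hA
  ⟨k, σ, h.symm.trans hB⟩

theorem genAll (hA : IsGenInstance A B) (X : ℕ) : IsGenInstance A (B.genAll X) := by
  obtain ⟨k, σ, hB⟩ := hA
  refine ⟨k + 1, fun n => (σ n).psubst (absFn X k), .all ?_⟩
  have habs : UEq (B.absAux X 0) ((allN k (A.psubst σ)).absAux X 0) := by
    rw [UTy.absAux_eq_psubst B, UTy.absAux_eq_psubst (allN _ _)]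
    exact hB.psubst _
  rwa [UTy.absAux_allN, Nat.zero_add, UTy.absAux_eq_psubst (A.psubst σ), UTy.psubst_psubst]
    at habs

theorem subst {U : UTy} {T : Ty} (hA : IsGenInstance (.arrow U T) (.all B)) (V : UTy) :
    IsGenInstance (.arrow U T) (UTy.subst 0 V B) := by
  obtain ⟨k, σ, hB⟩ := hA
  cases k with
  | zero => exact (hB.isAll_iff.mp trivial).elim
  | succ k =>
    refine ⟨k, fun n => (σ n).psubst (substFn k V), ?_⟩
    have hsubst :
        UEq (UTy.subst 0 V B) (UTy.subst 0 V (allN k ((UTy.arrow U T).psubst σ))) := by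
      rw [UTy.subst_eq_psubst B, UTy.subst_eq_psubst (allN _ _)]
      exact hB.of_all.psubst _
    rwa [UTy.subst_allN, Nat.zero_add, UTy.subst_eq_psubst (UTy.psubst _ _), UTy.psubst_psubst]
      at hsubst

theorem exists_uEq_psubst {U U' : UTy} {T T' : Ty}
    (hA : IsGenInstance (.arrow U' T') (.arrow U T)) :
    ∃ σ, UEq (.arrow U T) ((UTy.arrow U' T').psubst σ) := by
  obtain ⟨k, σ, hB⟩ := hA
  cases k with
  | zero => exact ⟨σ, hB⟩
  | succ k => exact (hB.isAll_iff.mpr trivial).elim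

end UTy.IsGenInstance

theorem SSub.isGenInstance {U : UTy} {T : Ty} {B B' : UTy} (h : SSub B B')
    (hB : (UTy.arrow U T).IsGenInstance B) : (UTy.arrow U T).IsGenInstance B' := by
  cases h with
  | gen X hgen => exact (hB.genAll X).of_uEq hgen.symm
  | inst C V hall hsubst => exact ((hB.of_uEq hall).subst V).of_uEq hsubst.symm

theorem TPre.isGenInstance {U : UTy} {T : Ty} {R R' : Ty} (h : TPre R R') :
    (∃ B, TEq R (.unit B) ∧ (UTy.arrow U T).IsGenInstance B) →
      ∃ B', TEq R' (.unit B') ∧ (UTy.arrow U T).IsGenInstance B' := by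
  induction h with
  | ofEq h => exact fun ⟨B, hR, hB⟩ => ⟨B, h.symm.trans hR, hB⟩
  | ofSSub h =>
    exact fun ⟨B, hR, hB⟩ => ⟨_, .refl _, h.isGenInstance (hB.of_uEq hR.uEq_of_unit.symm)⟩
  | trans _ _ ih₁ ih₂ => exact fun hR => ih₂ (ih₁ hR)

/-- The sequential substitution `A[V₁/X₁]…[Vₙ/Xₙ]` along `l = [(X₁, V₁), …, (Xₙ, Vₙ)]`. -/
def UTy.replSeq (l : List (ℕ × UTy)) (A : UTy) : UTy :=
  l.foldl (fun B p => UTy.repl p.1 p.2 B) A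

namespace UTy

theorem replSeq_cons (p : ℕ × UTy) (l : List (ℕ × UTy)) (A : UTy) :
    replSeq (p :: l) A = replSeq l (UTy.repl p.1 p.2 A) := rfl

theorem replSeq_append (l₁ l₂ : List (ℕ × UTy)) (A : UTy) :
    replSeq (l₁ ++ l₂) A = replSeq l₂ (replSeq l₁ A) :=
  List.foldl_append

theorem replSeq_psubst (l : List (ℕ × UTy)) (A : UTy) :
    ∀ σ, replSeq l (A.psubst σ) = A.psubst fun n => replSeq l (σ n) := by
  induction l with
  | nil => intro σ; rfl
  | cons p l ih => intro σ; simp only [replSeq_cons, UTy.repl_psubst, ih]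

theorem replSeq_eq_psubst (l : List (ℕ × UTy)) (A : UTy) :
    replSeq l A = A.psubst fun n => replSeq l (.var n) := by
  conv_lhs => rw [← UTy.psubst_var A]
  exact replSeq_psubst l A _

theorem replSeq_of_forall_repl_eq {l : List (ℕ × UTy)} {A : UTy}
    (h : ∀ q ∈ l, UTy.repl q.1 q.2 A = A) : replSeq l A = A := by
  induction l with
  | nil => rfl
  | cons q l ih =>
    rw [replSeq_cons, h q List.mem_cons_self, ih fun q' hq' => h q' (List.mem_cons_of_mem q hq')]

theorem replSeq_var_of_mem {l : List (ℕ × UTy)} (hnodup : (l.map Prod.fst).Nodup)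
    (hfix : ∀ p ∈ l, ∀ q ∈ l, UTy.repl q.1 q.2 p.2 = p.2) {p : ℕ × UTy} (hp : p ∈ l) :
    replSeq l (.var p.1) = p.2 := by
  induction l with
  | nil => simp at hp
  | cons r l ih =>
    rw [List.map_cons, List.nodup_cons] at hnodup
    rw [replSeq_cons]
    by_cases hpr : p = r
    · subst hpr
      rw [repl_var_self]
      exact replSeq_of_forall_repl_eq fun q hq => hfix _ List.mem_cons_self q (.tail _ hq)
    · have hpl : p ∈ l := (List.mem_cons.mp hp).resolve_left hpr
      have hne : p.1 ≠ r.1 := fun h => hnodup.1 (h ▸ List.mem_map_of_mem hpl)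
      rw [repl_var_of_ne _ hne]
      exact ih hnodup.2 (fun p hp q hq => hfix p (.tail _ hp) q (.tail _ hq)) hpl

/-- First rename the free variables `n < A.fvBound` to fresh ones `N + n`, then substitute
`σ n` for `N + n`. -/
theorem exists_replSeq_eq_psubst (σ : ℕ → UTy) (A : UTy) : ∃ l, replSeq l A = A.psubst σ := by
  set F := A.fvBound
  set N := F + (Finset.range F).sup fun n => (σ n).fvBound
  have hσN : ∀ n < F, (σ n).fvBound ≤ N := fun n hn =>
    (Finset.le_sup (f := fun n => (σ n).fvBound) (Finset.mem_range.mpr hn)).trans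
      (Nat.le_add_left _ _)
  set rename := (List.range F).map fun n => (n, UTy.var (N + n))
  set inst := (List.range F).map fun n => (N + n, σ n)
  have hrename : ∀ n < F, replSeq rename (.var n) = .var (N + n) := by
    intro n hn
    refine replSeq_var_of_mem (p := (n, .var (N + n))) ?_ ?_ (by simpa [rename] using hn)
    · simpa [rename, List.map_map, Function.comp_def] using List.nodup_range
    · simp only [rename, List.mem_map, List.mem_range]
      rintro _ ⟨i, hi, rfl⟩ _ ⟨j, hj, rfl⟩
      exact repl_var_of_ne _ (by omega)
  have hinst : ∀ n < F, replSeq inst (.var (N + n)) = σ n := by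
    intro n hn
    refine replSeq_var_of_mem (p := (N + n, σ n)) ?_ ?_ (by simpa [inst] using hn)
    · simpa [inst, List.map_map, Function.comp_def] using
        List.nodup_range.map (add_right_injective N)
    · simp only [inst, List.mem_map, List.mem_range]
      rintro _ ⟨i, hi, rfl⟩ _ ⟨j, hj, rfl⟩
      exact repl_of_fvBound_le _ ((hσN i hi).trans (Nat.le_add_right N j))
  refine ⟨rename ++ inst, ?_⟩
  rw [replSeq_eq_psubst]
  exact A.psubst_congr fun n hn => by rw [replSeq_append, hrename n hn, hinst n hn]

end UTy

theorem Ty.foldl_repl_unit (l : List (ℕ × UTy)) (A : UTy) :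
    l.foldl (fun T p => Ty.repl p.1 p.2 T) (.unit A) = .unit (A.replSeq l) := by
  induction l generalizing A with
  | nil => rfl
  | cons p l ih => exact ih _

/-- **Arrow comparison** (Lemma 5).  If `U'→T' ≼ U→T`, then there exist
variables `X⃗` and unit types `V⃗` such that `U→T ≡ (U'→T')[V⃗/X⃗]`. -/
theorem arrow_comparison {U U' : UTy} {T T' : Ty}
    (h : TPre (.unit (.arrow U' T')) (.unit (.arrow U T))) :
    ∃ l : List (ℕ × UTy),
      TEq (.unit (.arrow U T))
        (l.foldl (fun A p => Ty.repl p.1 p.2 A) (.unit (.arrow U' T'))) := by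
  obtain ⟨B, hB, hinst⟩ := h.isGenInstance ⟨_, .refl _, UTy.IsGenInstance.refl _⟩
  obtain ⟨σ, hσ⟩ := (hinst.of_uEq hB.uEq_of_unit.symm).exists_uEq_psubst
  obtain ⟨l, hl⟩ := UTy.exists_replSeq_eq_psubst σ (.arrow U' T')
  exact ⟨l, by rw [Ty.foldl_repl_unit, hl]; exact .unit hσ⟩
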